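/- arXiv:2211.12191 — 3 statements merged into one kernel-verified Lean document; each statement's English description precedes it below -/
import Mathlib

section
/- Let k ≥ 1 be an integer, let c₀ > 0, and let g : ℝ → ℝ be differentiable. Assume: (i) |g(θ) − c₀·cos(kθ)| < c₀/2 for all θ ∈ ℝ; (ii) for every θ ∈ ℝ with |cos(kθ)| ≤ 1/2, one has sin(kθ)·g′(θ) < 0 (in particular g′(θ) ≠ 0 there). Then the set {θ ∈ [0,π) : g(θ) = 0} has exactly k elements. -/
open Real Set

private lemma cos_shift (y : ℝ) (j : ℕ) :
    Real.cos (y + j * Real.pi) = (-1) ^ j * Real.cos y := by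
  have h := Real.cos_nat_mul_pi_sub (-y) j
  rw [Real.cos_neg] at h
  rw [← h]; ring_nf

private lemma sin_shift (y : ℝ) (j : ℕ) :
    Real.sin (y + j * Real.pi) = (-1) ^ j * Real.sin y := by
  have h := Real.sin_nat_mul_pi_sub (-y) j
  rw [Real.sin_neg] at h
  have : Real.sin (y + j * Real.pi) = Real.sin (j * Real.pi - -y) := by ring_nf
  rw [this, h]; ring

private lemma mid_of_abs_cos_lt {y : ℝ} (hy0 : 0 ≤ y) (hy1 : y ≤ Real.pi)
    (h : |Real.cos y| < 1 / 2) : Real.pi / 3 < y ∧ y < 2 * Real.pi / 3 := by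
  have hπ := Real.pi_pos
  obtain ⟨h1, h2⟩ := abs_lt.mp h
  constructor
  · by_contra hle
    push_neg at hle
    have := Real.cos_le_cos_of_nonneg_of_le_pi hy0 (by linarith) hle
    rw [Real.cos_pi_div_three] at this; linarith
  · by_contra hle
    push_neg at hle
    have h23 : Real.cos (2 * Real.pi / 3) = -(1/2) := by
      have : (2 : ℝ) * Real.pi / 3 = Real.pi - Real.pi / 3 := by ring
      rw [this, Real.cos_pi_sub, Real.cos_pi_div_three]
    have := Real.cos_le_cos_of_nonneg_of_le_pi (by linarith) hy1 hle
    rw [h23] at this; linarith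

private lemma uniqueZeroAux {g : ℝ → ℝ} (hg : Differentiable ℝ g) {A B : ℝ} (hAB : A < B)
    (hder : ∀ x ∈ Set.Icc A B, deriv g x < 0) (hA : 0 < g A) (hB : g B < 0) :
    ∃! x, x ∈ Set.Icc A B ∧ g x = 0 := by
  have hcont : ContinuousOn g (Set.Icc A B) := hg.continuous.continuousOn
  have hanti : StrictAntiOn g (Set.Icc A B) :=
    strictAntiOn_of_deriv_neg (convex_Icc A B) hcont
      (fun x hx => hder x (interior_subset hx))
  obtain ⟨x, hx, hgx⟩ := intermediate_value_Icc' hAB.le hcont ⟨hB.le, hA.le⟩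
  exact ⟨x, ⟨hx, hgx⟩, fun y ⟨hy, hgy⟩ => hanti.injOn hy hx (hgy.trans hgx.symm)⟩

set_option maxHeartbeats 1000000 in
/-- Abstract content of Lemma 5.11 (lem:solutions): a differentiable function `g` that is
uniformly `c₀/2`-close to `c₀·cos(kθ)` and whose derivative has sign opposite to `sin(kθ)`
on the region where `|cos(kθ)| ≤ 1/2` has exactly `k` zeros in `[0,π)`. -/
theorem zeros_count (k : ℕ) (hk : 1 ≤ k) (c₀ : ℝ) (hc₀ : 0 < c₀) (g : ℝ → ℝ)
    (hg : Differentiable ℝ g)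
    (hval : ∀ θ : ℝ, |g θ - c₀ * Real.cos ((k : ℝ) * θ)| < c₀ / 2)
    (hder : ∀ θ : ℝ, |Real.cos ((k : ℝ) * θ)| ≤ 1 / 2 →
      Real.sin ((k : ℝ) * θ) * deriv g θ < 0) :
    {θ ∈ Set.Ico (0 : ℝ) Real.pi | g θ = 0}.ncard = k := by
  have hkR : (0 : ℝ) < k := by exact_mod_cast hk
  have hπ := Real.pi_pos
  set a : ℕ → ℝ := fun j => (Real.pi / 3 + j * Real.pi) / k with ha_def
  set b : ℕ → ℝ := fun j => (2 * Real.pi / 3 + j * Real.pi) / k with hb_def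
  clear_value a b
  -- key: exactly one zero in each Icc (a j) (b j)
  have key : ∀ j : ℕ, j < k → ∃! x, x ∈ Set.Icc (a j) (b j) ∧ g x = 0 := by
    intro j hj
    set s : ℝ := (-1) ^ j with hs_def
    clear_value s
    have hs2 : s * s = 1 := by
      rw [hs_def, ← pow_add]
      exact Even.neg_one_pow ⟨j, rfl⟩
    have hss : |s| = 1 := by
      rw [hs_def, abs_pow, abs_neg, abs_one, one_pow]
    have hs0 : s ≠ 0 := by
      intro h; rw [h] at hss; norm_num at hss
    have hjR : (0 : ℝ) ≤ j := Nat.cast_nonneg j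
    have hka : (k : ℝ) * a j = Real.pi / 3 + j * Real.pi := by
      simp only [ha_def]; field_simp
    have hkb : (k : ℝ) * b j = 2 * Real.pi / 3 + j * Real.pi := by
      simp only [hb_def]; field_simp
    have hAB : a j < b j := by
      simp only [ha_def, hb_def]
      rw [div_lt_div_iff₀ hkR hkR]
      nlinarith [mul_pos hπ hkR]
    -- cos at endpoints
    have hcosa : Real.cos ((k : ℝ) * a j) = s * (1 / 2) := by
      rw [hka, cos_shift, Real.cos_pi_div_three, hs_def]
    have hcosb : Real.cos ((k : ℝ) * b j) = s * (-(1 / 2)) := by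
      rw [hkb]
      have : (2 : ℝ) * Real.pi / 3 = Real.pi - Real.pi / 3 := by ring
      rw [this, cos_shift, Real.cos_pi_sub, Real.cos_pi_div_three, hs_def]
    -- endpoint sign conditions for s * g
    have hga : 0 < s * g (a j) := by
      have h := hval (a j)
      rw [hcosa] at h
      have : |s * g (a j) - c₀ / 2| < c₀ / 2 := by
        have : s * g (a j) - c₀ / 2 = s * (g (a j) - c₀ * (s * (1 / 2))) := by
          linear_combination (c₀ / 2) * hs2
        rw [this, abs_mul, hss, one_mul]; exact h
      obtain ⟨h1, _⟩ := abs_lt.mp this; linarith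
    have hgb : s * g (b j) < 0 := by
      have h := hval (b j)
      rw [hcosb] at h
      have : |s * g (b j) + c₀ / 2| < c₀ / 2 := by
        have : s * g (b j) + c₀ / 2 = s * (g (b j) - c₀ * (s * (-(1 / 2)))) := by
          linear_combination (-(c₀ / 2)) * hs2
        rw [this, abs_mul, hss, one_mul]; exact h
      obtain ⟨_, h2⟩ := abs_lt.mp this; linarith
    -- derivative sign
    have hder' : ∀ x ∈ Set.Icc (a j) (b j), deriv (fun θ => s * g θ) x < 0 := by
      intro x hx
      obtain ⟨hx1, hx2⟩ := hx
      set y : ℝ := (k : ℝ) * x - j * Real.pi with hy_def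
      have hkx : (k : ℝ) * x = y + j * Real.pi := by ring
      have hy1 : Real.pi / 3 ≤ y := by
        have := mul_le_mul_of_nonneg_left hx1 hkR.le
        rw [hka] at this; simp only [hy_def]; linarith
      have hy2 : y ≤ 2 * Real.pi / 3 := by
        have := mul_le_mul_of_nonneg_left hx2 hkR.le
        rw [hkb] at this; simp only [hy_def]; linarith
      have hcosy1 : Real.cos y ≤ 1 / 2 := by
        have := Real.cos_le_cos_of_nonneg_of_le_pi (by positivity) (by linarith) hy1
        rwa [Real.cos_pi_div_three] at this
      have hcosy2 : -(1 / 2) ≤ Real.cos y := by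
        have h23 : Real.cos (2 * Real.pi / 3) = -(1 / 2) := by
          have : (2 : ℝ) * Real.pi / 3 = Real.pi - Real.pi / 3 := by ring
          rw [this, Real.cos_pi_sub, Real.cos_pi_div_three]
        have := Real.cos_le_cos_of_nonneg_of_le_pi (by linarith) (by linarith) hy2
        rwa [h23] at this
      have hsiny : 0 < Real.sin y :=
        Real.sin_pos_of_pos_of_lt_pi (by linarith) (by linarith)
      have habs : |Real.cos ((k : ℝ) * x)| ≤ 1 / 2 := by
        rw [hkx, cos_shift, abs_mul, ← hs_def, hss, one_mul, abs_le]
        exact ⟨hcosy2, hcosy1⟩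
      have h := hder x habs
      rw [hkx, sin_shift, ← hs_def] at h
      have hD : deriv (fun θ => s * g θ) x = s * deriv g x := by
        exact deriv_const_mul s (hg x)
      rw [hD]
      nlinarith [hsiny, h, mul_pos hsiny hsiny]
    obtain ⟨x, ⟨hx, hgx⟩, hu⟩ :=
      uniqueZeroAux (hg.const_mul s) hAB hder' hga hgb
    refine ⟨x, ⟨hx, ?_⟩, ?_⟩
    · rcases mul_eq_zero.mp hgx with h | h
      · exact absurd h hs0
      · exact h
    · rintro y ⟨hy, hgy⟩
      exact hu y ⟨hy, by rw [hgy, mul_zero]⟩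
  classical
  choose z hz using fun j : Fin k => key j j.2
  -- interval bounds
  have ha_nonneg : ∀ j : Fin k, 0 ≤ a j := by
    intro j
    have : (0 : ℝ) ≤ (j : ℝ) := Nat.cast_nonneg _
    simp only [ha_def]
    apply div_nonneg (by nlinarith) hkR.le
  have hb_lt : ∀ j : Fin k, b j < Real.pi := by
    intro j
    have hjk : ((j : ℕ) : ℝ) + 1 ≤ (k : ℝ) := by exact_mod_cast j.2
    simp only [hb_def]
    rw [div_lt_iff₀ hkR]
    nlinarith
  have hrange : {θ ∈ Set.Ico (0 : ℝ) Real.pi | g θ = 0} = Set.range z := by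
    ext θ
    constructor
    · rintro ⟨⟨hθ0, hθπ⟩, hgθ⟩
      -- |cos (kθ)| < 1/2
      have h := hval θ
      rw [hgθ, zero_sub, abs_neg, abs_mul, abs_of_pos hc₀] at h
      have hcos : |Real.cos ((k : ℝ) * θ)| < 1 / 2 := by
        by_contra hle
        push_neg at hle
        nlinarith
      set x : ℝ := (k : ℝ) * θ with hx_def
      have hx0 : 0 ≤ x := by positivity
      have hxk : x < k * Real.pi := by
        rw [hx_def]; exact mul_lt_mul_of_pos_left hθπ hkR
      set j : ℕ := ⌊x / Real.pi⌋.toNat with hj_def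
      have hjx : (j : ℝ) * Real.pi ≤ x := by
        have h1 : (0 : ℝ) ≤ x / Real.pi := by positivity
        have h2 : ((j : ℕ) : ℝ) = (⌊x / Real.pi⌋ : ℝ) := by
          rw [hj_def]
          exact_mod_cast Int.toNat_of_nonneg (Int.floor_nonneg.mpr h1)
        rw [h2]
        have := Int.floor_le (x / Real.pi)
        calc (⌊x / Real.pi⌋ : ℝ) * Real.pi ≤ (x / Real.pi) * Real.pi :=
              mul_le_mul_of_nonneg_right this hπ.le
          _ = x := by field_simp
      have hxj : x < ((j : ℕ) : ℝ) * Real.pi + Real.pi := by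
        have h1 : (0 : ℝ) ≤ x / Real.pi := by positivity
        have h2 : ((j : ℕ) : ℝ) = (⌊x / Real.pi⌋ : ℝ) := by
          rw [hj_def]
          exact_mod_cast Int.toNat_of_nonneg (Int.floor_nonneg.mpr h1)
        rw [h2]
        have := Int.lt_floor_add_one (x / Real.pi)
        have := (div_lt_iff₀ hπ).mp this
        linarith [this]
      have hjk : j < k := by
        by_contra hle
        push_neg at hle
        have : (k : ℝ) ≤ (j : ℝ) := by exact_mod_cast hle
        nlinarith
      set y : ℝ := x - j * Real.pi with hy_def
      have hy0 : 0 ≤ y := by simp only [hy_def]; linarith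
      have hy1 : y ≤ Real.pi := by simp only [hy_def]; linarith
      have hcosy : |Real.cos y| < 1 / 2 := by
        have hxy : x = y + j * Real.pi := by ring
        rw [hxy, cos_shift, abs_mul, abs_pow, abs_neg, abs_one, one_pow, one_mul] at hcos
        exact hcos
      obtain ⟨hm1, hm2⟩ := mid_of_abs_cos_lt hy0 hy1 hcosy
      have hθab : θ ∈ Set.Icc (a j) (b j) := by
        constructor
        · simp only [ha_def]
          rw [div_le_iff₀ hkR]
          simp only [hy_def] at hm1
          rw [hx_def] at hm1
          linarith [hm1]
        · simp only [hb_def]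
          rw [le_div_iff₀ hkR]
          simp only [hy_def] at hm2
          rw [hx_def] at hm2
          linarith [hm2]
      obtain ⟨_, hu⟩ := hz ⟨j, hjk⟩
      exact ⟨⟨j, hjk⟩, (hu θ ⟨hθab, hgθ⟩).symm⟩
    · rintro ⟨j, rfl⟩
      obtain ⟨⟨⟨hz1, hz2⟩, hz3⟩, _⟩ := hz j
      exact ⟨⟨le_trans (ha_nonneg j) hz1, lt_of_le_of_lt hz2 (hb_lt j)⟩, hz3⟩
  have hinj : Function.Injective z := by
    have hmono : StrictMono z := by
      intro i j hij
      obtain ⟨⟨⟨_, hi2⟩, _⟩, _⟩ := hz i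
      obtain ⟨⟨⟨hj1, _⟩, _⟩, _⟩ := hz j
      have hij' : ((i : ℕ) : ℝ) + 1 ≤ ((j : ℕ) : ℝ) := by exact_mod_cast hij
      have hba : b i < a j := by
        simp only [ha_def, hb_def]
        rw [div_lt_div_iff₀ hkR hkR]
        nlinarith [mul_nonneg (mul_nonneg (by linarith : (0:ℝ) ≤ ((j:ℕ):ℝ) - ((i:ℕ):ℝ) - 1) hπ.le) hkR.le, mul_pos hπ hkR]
      linarith
    exact hmono.injective
  rw [hrange, ← Set.image_univ, Set.ncard_image_of_injective _ hinj, Set.ncard_univ,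
    Nat.card_eq_fintype_card, Fintype.card_fin]
end

section
/- Let d ∈ ℕ, let (cᵢ)_{i≥0} be a real sequence with c₀ ≠ 0, and let R₀ > 0 be such that S′ := Σ_{i=1}^∞ |cᵢ|·|(d+2)−2i|·R₀^{−2(i−1)} is finite. Let R ≥ R₀, C₁ > 0, C₂ > 0, and let θ : (R,∞) → ℝ be a differentiable function such that for all r > R: (i) θ′(r) = (Σ_{i≥0} cᵢ·((d+2)−2i)·r^{(d+1)−2i}·cos(((d+2)−2i)·θ(r))) / (Σ_{i≥0} cᵢ·((d+2)−2i)·r^{(d+2)−2i}·sin(((d+2)−2i)·θ(r))); (ii) |cos((d+2)·θ(r))| ≤ C₁·r^{−2}; (iii) |sin((d+2)·θ(r))| ≥ C₂. Then there exist R₁ ≥ R and M > 0 such that |θ′(r)| ≤ M·r^{−3} for all r > R₁. -/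
/-- Numerator terms. -/
noncomputable def thetaTermN (d : ℕ) (c : ℕ → ℝ) (r x : ℝ) (i : ℕ) : ℝ :=
  c i * (((d : ℤ) + 2 - 2 * (i : ℤ) : ℤ) : ℝ) * r ^ ((d : ℤ) + 1 - 2 * (i : ℤ)) *
    Real.cos ((((d : ℤ) + 2 - 2 * (i : ℤ) : ℤ) : ℝ) * x)

/-- Denominator terms. -/
noncomputable def thetaTermD (d : ℕ) (c : ℕ → ℝ) (r x : ℝ) (i : ℕ) : ℝ :=
  c i * (((d : ℤ) + 2 - 2 * (i : ℤ) : ℤ) : ℝ) * r ^ ((d : ℤ) + 2 - 2 * (i : ℤ)) *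
    Real.sin ((((d : ℤ) + 2 - 2 * (i : ℤ) : ℤ) : ℝ) * x)

/-- Odd-degree case of Lemma 5.12 (lem:bound_theta_std): the zero-angle function `θ(r)`
of `φ`, which satisfies the implicit-differentiation identity (i) together with the
estimates (ii), (iii), has derivative decaying like `r^{-3}`. -/
theorem theta_decay (d : ℕ) (c : ℕ → ℝ) (hc₀ : c 0 ≠ 0) (R₀ : ℝ) (hR₀ : 0 < R₀)
    (hS' : Summable (fun i : ℕ =>
      |c (i + 1)| * |(((d : ℤ) + 2 - 2 * ((i : ℤ) + 1) : ℤ) : ℝ)| * R₀ ^ (-2 * (i : ℤ))))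
    (R : ℝ) (hR : R₀ ≤ R) (C₁ C₂ : ℝ) (hC₁ : 0 < C₁) (hC₂ : 0 < C₂)
    (θ : ℝ → ℝ)
    (hderiv : ∀ r : ℝ, R < r → HasDerivAt θ
      ((∑' i : ℕ, c i * (((d : ℤ) + 2 - 2 * (i : ℤ) : ℤ) : ℝ) *
          r ^ ((d : ℤ) + 1 - 2 * (i : ℤ)) *
          Real.cos ((((d : ℤ) + 2 - 2 * (i : ℤ) : ℤ) : ℝ) * θ r)) /
        (∑' i : ℕ, c i * (((d : ℤ) + 2 - 2 * (i : ℤ) : ℤ) : ℝ) *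
          r ^ ((d : ℤ) + 2 - 2 * (i : ℤ)) *
          Real.sin ((((d : ℤ) + 2 - 2 * (i : ℤ) : ℤ) : ℝ) * θ r))) r)
    (hcos : ∀ r : ℝ, R < r → |Real.cos (((d : ℝ) + 2) * θ r)| ≤ C₁ * r ^ (-2 : ℤ))
    (hsin : ∀ r : ℝ, R < r → C₂ ≤ |Real.sin (((d : ℝ) + 2) * θ r)|) :
    ∃ R₁ : ℝ, R ≤ R₁ ∧ ∃ M : ℝ, 0 < M ∧
      ∀ r : ℝ, R₁ < r → |deriv θ r| ≤ M * r ^ (-3 : ℤ) := by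
  have habs0 : 0 < |c 0| := abs_pos.mpr hc₀
  have hR0 : (0:ℝ) < R := lt_of_lt_of_le hR₀ hR
  set b : ℕ → ℝ := fun i =>
    |c (i + 1)| * |(((d : ℤ) + 2 - 2 * ((i : ℤ) + 1) : ℤ) : ℝ)| * R₀ ^ (-2 * (i : ℤ)) with hbdef
  have hbsum : Summable b := hS'
  have hbnn : ∀ i, 0 ≤ b i := fun i => by positivity
  set S' : ℝ := ∑' i, b i with hS'def
  have hS'nn : 0 ≤ S' := tsum_nonneg hbnn
  set B : ℝ := |c 0| * ((d:ℝ) + 2) * C₂ with hBdef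
  have hB : 0 < B := by positivity
  set A : ℝ := |c 0| * ((d:ℝ) + 2) * C₁ + S' with hAdef
  have hA : 0 < A := by positivity
  refine ⟨max R (Real.sqrt (2 * S' / B)), le_max_left _ _, 2 * A / B, by positivity, ?_⟩
  intro r hr
  have hrR : R < r := (le_max_left _ _).trans_lt hr
  have hr0 : 0 < r := hR0.trans hrR
  have hrne : r ≠ 0 := ne_of_gt hr0
  have hrR₀ : R₀ ≤ r := hR.trans hrR.le
  have hrpos : ∀ m : ℤ, 0 < r ^ m := fun m => zpow_pos hr0 m
  have hS'le : S' ≤ B * (r * r) / 2 := by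
    have hs : Real.sqrt (2 * S' / B) < r := (le_max_right _ _).trans_lt hr
    have h2 := Real.sq_sqrt (show (0:ℝ) ≤ 2 * S' / B by positivity)
    have h1 : 2 * S' / B < r * r := by
      nlinarith [Real.sqrt_nonneg (2 * S' / B)]
    rw [div_lt_iff₀ hB] at h1
    nlinarith
  have hpow : ∀ i : ℕ, r ^ (-2 * (i:ℤ)) ≤ R₀ ^ (-2 * (i:ℤ)) := by
    intro i
    have he : (-2 * (i:ℤ)) = -((2 * i : ℕ) : ℤ) := by push_cast; ring
    rw [he, zpow_neg, zpow_neg, zpow_natCast, zpow_natCast]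
    exact inv_anti₀ (pow_pos hR₀ _) (pow_le_pow_left₀ hR₀.le hrR₀ _)
  set x := θ r with hxdef
  -- numerator tail bound
  have hftail : ∀ i : ℕ, |thetaTermN d c r x (i + 1)| ≤ b i * r ^ ((d:ℤ) - 1) := by
    intro i
    simp only [thetaTermN, hbdef, Nat.cast_add, Nat.cast_one]
    rw [abs_mul, abs_mul, abs_mul, abs_of_pos (hrpos _)]
    have h1 : r ^ ((d:ℤ) + 1 - 2 * ((i:ℤ) + 1)) = r ^ (-2 * (i:ℤ)) * r ^ ((d:ℤ) - 1) := by
      rw [← zpow_add₀ hrne]; ring_nf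
    rw [h1]
    calc |c (i+1)| * |(((d : ℤ) + 2 - 2 * ((i:ℤ)+1) : ℤ) : ℝ)| *
          (r ^ (-2*(i:ℤ)) * r ^ ((d:ℤ)-1)) *
          |Real.cos ((((d : ℤ) + 2 - 2 * ((i:ℤ)+1) : ℤ) : ℝ) * x)|
        ≤ |c (i+1)| * |(((d : ℤ) + 2 - 2 * ((i:ℤ)+1) : ℤ) : ℝ)| *
          (R₀ ^ (-2*(i:ℤ)) * r ^ ((d:ℤ)-1)) * 1 := by
          gcongr
          · exact hpow i
          · exact Real.abs_cos_le_one _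
      _ = |c (i+1)| * |(((d : ℤ) + 2 - 2 * ((i:ℤ)+1) : ℤ) : ℝ)| * R₀ ^ (-2*(i:ℤ)) *
            r ^ ((d:ℤ)-1) := by ring
  have hfb_sum : Summable (fun i => b i * r ^ ((d:ℤ) - 1)) := hbsum.mul_right _
  have hftail_abs : Summable (fun i => |thetaTermN d c r x (i + 1)|) :=
    hfb_sum.of_nonneg_of_le (fun i => abs_nonneg _) hftail
  have hftail_sum : Summable (fun i => thetaTermN d c r x (i + 1)) := hftail_abs.of_abs
  have hfsum : Summable (thetaTermN d c r x) := (summable_nat_add_iff 1).mp hftail_sum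
  have hFtail : |∑' i, thetaTermN d c r x (i + 1)| ≤ S' * r ^ ((d:ℤ) - 1) := by
    calc |∑' i, thetaTermN d c r x (i + 1)| ≤ ∑' i, |thetaTermN d c r x (i + 1)| := by
          simpa [Real.norm_eq_abs] using
            norm_tsum_le_tsum_norm (f := fun i => thetaTermN d c r x (i+1))
              (by simpa [Real.norm_eq_abs] using hftail_abs)
      _ ≤ ∑' i, b i * r ^ ((d:ℤ)-1) := Summable.tsum_le_tsum hftail hftail_abs hfb_sum
      _ = S' * r ^ ((d:ℤ)-1) := by rw [hS'def, tsum_mul_right]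
  have hf0 : |thetaTermN d c r x 0| ≤ |c 0| * ((d:ℝ)+2) * C₁ * r ^ ((d:ℤ) - 1) := by
    simp only [thetaTermN, Nat.cast_zero, mul_zero, sub_zero]
    have hc2 : ((((d:ℤ) + 2 : ℤ)) : ℝ) = (d:ℝ) + 2 := by push_cast; ring
    rw [hc2, abs_mul, abs_mul, abs_mul, abs_of_pos (hrpos _),
      abs_of_nonneg (by positivity : (0:ℝ) ≤ (d:ℝ)+2)]
    calc |c 0| * ((d:ℝ)+2) * r ^ ((d:ℤ)+1) * |Real.cos (((d:ℝ)+2) * x)|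
        ≤ |c 0| * ((d:ℝ)+2) * r ^ ((d:ℤ)+1) * (C₁ * r ^ (-2:ℤ)) := by
          gcongr
          exact hcos r hrR
      _ = |c 0| * ((d:ℝ)+2) * C₁ * (r ^ ((d:ℤ)+1) * r ^ (-2:ℤ)) := by ring
      _ = |c 0| * ((d:ℝ)+2) * C₁ * r ^ ((d:ℤ)-1) := by
          rw [← zpow_add₀ hrne]; congr 1; ring
  have hF : |∑' i, thetaTermN d c r x i| ≤ A * r ^ ((d:ℤ) - 1) := by
    rw [Summable.tsum_eq_zero_add hfsum]
    calc |thetaTermN d c r x 0 + ∑' i, thetaTermN d c r x (i+1)|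
        ≤ |thetaTermN d c r x 0| + |∑' i, thetaTermN d c r x (i+1)| := abs_add_le _ _
      _ ≤ |c 0| * ((d:ℝ)+2) * C₁ * r ^ ((d:ℤ)-1) + S' * r ^ ((d:ℤ)-1) :=
          add_le_add hf0 hFtail
      _ = A * r ^ ((d:ℤ)-1) := by rw [hAdef]; ring
  -- denominator
  have hgtail : ∀ i : ℕ, |thetaTermD d c r x (i + 1)| ≤ b i * r ^ ((d:ℤ)) := by
    intro i
    simp only [thetaTermD, hbdef, Nat.cast_add, Nat.cast_one]
    rw [abs_mul, abs_mul, abs_mul, abs_of_pos (hrpos _)]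
    have h1 : r ^ ((d:ℤ) + 2 - 2 * ((i:ℤ) + 1)) = r ^ (-2 * (i:ℤ)) * r ^ ((d:ℤ)) := by
      rw [← zpow_add₀ hrne]; ring_nf
    rw [h1]
    calc |c (i+1)| * |(((d : ℤ) + 2 - 2 * ((i:ℤ)+1) : ℤ) : ℝ)| *
          (r ^ (-2*(i:ℤ)) * r ^ ((d:ℤ))) *
          |Real.sin ((((d : ℤ) + 2 - 2 * ((i:ℤ)+1) : ℤ) : ℝ) * x)|
        ≤ |c (i+1)| * |(((d : ℤ) + 2 - 2 * ((i:ℤ)+1) : ℤ) : ℝ)| *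
          (R₀ ^ (-2*(i:ℤ)) * r ^ ((d:ℤ))) * 1 := by
          gcongr
          · exact hpow i
          · exact Real.abs_sin_le_one _
      _ = |c (i+1)| * |(((d : ℤ) + 2 - 2 * ((i:ℤ)+1) : ℤ) : ℝ)| * R₀ ^ (-2*(i:ℤ)) *
            r ^ ((d:ℤ)) := by ring
  have hgb_sum : Summable (fun i => b i * r ^ ((d:ℤ))) := hbsum.mul_right _
  have hgtail_abs : Summable (fun i => |thetaTermD d c r x (i + 1)|) :=
    hgb_sum.of_nonneg_of_le (fun i => abs_nonneg _) hgtail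
  have hgtail_sum : Summable (fun i => thetaTermD d c r x (i + 1)) := hgtail_abs.of_abs
  have hgsum : Summable (thetaTermD d c r x) := (summable_nat_add_iff 1).mp hgtail_sum
  have hGtail : |∑' i, thetaTermD d c r x (i + 1)| ≤ S' * r ^ ((d:ℤ)) := by
    calc |∑' i, thetaTermD d c r x (i + 1)| ≤ ∑' i, |thetaTermD d c r x (i + 1)| := by
          simpa [Real.norm_eq_abs] using
            norm_tsum_le_tsum_norm (f := fun i => thetaTermD d c r x (i+1))
              (by simpa [Real.norm_eq_abs] using hgtail_abs)
      _ ≤ ∑' i, b i * r ^ ((d:ℤ)) := Summable.tsum_le_tsum hgtail hgtail_abs hgb_sum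
      _ = S' * r ^ ((d:ℤ)) := by rw [hS'def, tsum_mul_right]
  have hg0 : B * r ^ ((d:ℤ)+2) ≤ |thetaTermD d c r x 0| := by
    simp only [thetaTermD, Nat.cast_zero, mul_zero, sub_zero]
    have hc2 : ((((d:ℤ) + 2 : ℤ)) : ℝ) = (d:ℝ) + 2 := by push_cast; ring
    rw [hc2, abs_mul, abs_mul, abs_mul, abs_of_pos (hrpos _),
      abs_of_nonneg (by positivity : (0:ℝ) ≤ (d:ℝ)+2), hBdef]
    calc |c 0| * ((d:ℝ)+2) * C₂ * r ^ ((d:ℤ)+2)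
        = |c 0| * ((d:ℝ)+2) * r ^ ((d:ℤ)+2) * C₂ := by ring
      _ ≤ |c 0| * ((d:ℝ)+2) * r ^ ((d:ℤ)+2) * |Real.sin (((d:ℝ)+2) * x)| := by
          gcongr
          exact hsin r hrR
  have hz2 : r ^ ((d:ℤ)+2) = r ^ (d:ℤ) * (r * r) := by
    rw [show ((d:ℤ)+2) = (d:ℤ) + 1 + 1 by ring, zpow_add₀ hrne, zpow_add₀ hrne, zpow_one]
    ring
  have hkey : S' * r ^ (d:ℤ) ≤ B/2 * r ^ ((d:ℤ)+2) := by
    rw [hz2]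
    have hrd : 0 < r ^ (d:ℤ) := hrpos _
    nlinarith [hS'le]
  have hG : B/2 * r ^ ((d:ℤ)+2) ≤ |∑' i, thetaTermD d c r x i| := by
    rw [Summable.tsum_eq_zero_add hgsum]
    have htri : |thetaTermD d c r x 0| - |∑' i, thetaTermD d c r x (i+1)| ≤
        |thetaTermD d c r x 0 + ∑' i, thetaTermD d c r x (i+1)| := by
      have h := abs_add_le (thetaTermD d c r x 0 + ∑' i, thetaTermD d c r x (i+1))
        (-(∑' i, thetaTermD d c r x (i+1)))
      simp only [add_neg_cancel_right, abs_neg] at h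
      linarith
    linarith
  have hGpos : 0 < |∑' i, thetaTermD d c r x i| :=
    lt_of_lt_of_le (by positivity) hG
  have hd : deriv θ r = (∑' i, thetaTermN d c r x i) / (∑' i, thetaTermD d c r x i) :=
    (hderiv r hrR).deriv
  rw [hd, abs_div]
  calc |∑' i, thetaTermN d c r x i| / |∑' i, thetaTermD d c r x i|
      ≤ (A * r ^ ((d:ℤ)-1)) / (B/2 * r ^ ((d:ℤ)+2)) :=
        div_le_div₀ (by positivity) hF (by positivity) hG
    _ = 2 * A / B * r ^ (-3:ℤ) := by
        rw [show ((d:ℤ)-1) = ((d:ℤ)+2) + (-3) by ring, zpow_add₀ hrne]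
        have h1 : r ^ ((d:ℤ)+2) ≠ 0 := (hrpos _).ne'
        field_simp
end

section
/- Let d ∈ ℕ, let (cᵢ)_{i≥0} be a real sequence with c₀ > 0, and let R₀ > 0 be such that S := Σ_{i=1}^∞ |cᵢ|·R₀^{−2(i−1)} and S′ := Σ_{i=1}^∞ |cᵢ|·|(d+2)−2i|·R₀^{−2(i−1)} are both finite. Define φ(r,θ) := Σ_{i=0}^∞ cᵢ·r^{(d+2)−2i}·cos(((d+2)−2i)·θ) and D(r,θ) := Σ_{i=0}^∞ cᵢ·((d+2)−2i)·r^{(d+1)−2i}·cos(((d+2)−2i)·θ). Then for every m with 0 < m ≤ 1 there exists R ≥ R₀ such that for every r > R and every θ ∈ ℝ with |cos((d+2)θ)| ≥ m: the function s ↦ φ(s,θ) is differentiable at r with derivative D(r,θ), and moreover φ(r,θ) > 0 ⟺ cos((d+2)θ) > 0 ⟺ D(r,θ) > 0. -/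
/-- Odd-degree case of Lemma 5.15 (lem:ineq_relation_varphi_std): away from the tangency
angles (where `|cos((d+2)θ)| ≥ m`), for `r` large the function `s ↦ φ(s,θ)` is differentiable
in the radial direction with derivative `D(r,θ)`, and the signs of `φ(r,θ)`, `cos((d+2)θ)`
and `D(r,θ)` all agree. -/
theorem radial_sign_agreement (d : ℕ) (c : ℕ → ℝ) (hc₀ : 0 < c 0) (R₀ : ℝ) (hR₀ : 0 < R₀)
    (hS : Summable (fun i : ℕ => |c (i + 1)| * R₀ ^ (-2 * (i : ℤ))))
    (hS' : Summable (fun i : ℕ =>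
      |c (i + 1)| * |(((d : ℤ) + 2 - 2 * ((i : ℤ) + 1) : ℤ) : ℝ)| * R₀ ^ (-2 * (i : ℤ)))) :
    ∀ m : ℝ, 0 < m → m ≤ 1 → ∃ R : ℝ, R₀ ≤ R ∧
      ∀ r : ℝ, R < r → ∀ θ : ℝ, m ≤ |Real.cos (((d : ℝ) + 2) * θ)| →
        HasDerivAt
          (fun s : ℝ => ∑' i : ℕ, c i * s ^ ((d : ℤ) + 2 - 2 * (i : ℤ)) *
            Real.cos ((((d : ℤ) + 2 - 2 * (i : ℤ) : ℤ) : ℝ) * θ))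
          (∑' i : ℕ, c i * (((d : ℤ) + 2 - 2 * (i : ℤ) : ℤ) : ℝ) *
            r ^ ((d : ℤ) + 1 - 2 * (i : ℤ)) *
            Real.cos ((((d : ℤ) + 2 - 2 * (i : ℤ) : ℤ) : ℝ) * θ)) r ∧
        (0 < (∑' i : ℕ, c i * r ^ ((d : ℤ) + 2 - 2 * (i : ℤ)) *
            Real.cos ((((d : ℤ) + 2 - 2 * (i : ℤ) : ℤ) : ℝ) * θ)) ↔
          0 < Real.cos (((d : ℝ) + 2) * θ)) ∧
        (0 < Real.cos (((d : ℝ) + 2) * θ) ↔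
          0 < (∑' i : ℕ, c i * (((d : ℤ) + 2 - 2 * (i : ℤ) : ℤ) : ℝ) *
            r ^ ((d : ℤ) + 1 - 2 * (i : ℤ)) *
            Real.cos ((((d : ℤ) + 2 - 2 * (i : ℤ) : ℤ) : ℝ) * θ))) := by
  intro m hm hm1
  set k : ℕ → ℤ := fun i => (d : ℤ) + 2 - 2 * i with hk
  have hk1 : ∀ j : ℕ, k (j + 1) = (d : ℤ) - 2 * j := by
    intro j; simp only [hk]; push_cast; ring
  have hS'2 : Summable (fun i : ℕ =>
      |c (i + 1)| * |((k (i + 1) : ℤ) : ℝ)| * R₀ ^ (-2 * (i : ℤ))) := by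
    refine hS'.congr fun i => ?_
    have : (((d : ℤ) + 2 - 2 * ((i : ℤ) + 1) : ℤ) : ℝ) = ((k (i + 1) : ℤ) : ℝ) := by
      simp only [hk]; push_cast; ring
    rw [this]
  set S : ℝ := ∑' i : ℕ, |c (i + 1)| * R₀ ^ (-2 * (i : ℤ)) with hSdef
  set S' : ℝ := ∑' i : ℕ, |c (i + 1)| * |((k (i + 1) : ℤ) : ℝ)| * R₀ ^ (-2 * (i : ℤ)) with hS'def
  have hSnn : 0 ≤ S := tsum_nonneg fun i => by positivity
  have hS'nn : 0 ≤ S' := tsum_nonneg fun i => by positivity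
  set R : ℝ := max (max R₀ 1) (Real.sqrt ((S + S' + 1) / (c 0 * m))) with hRdef
  have hRR₀ : R₀ ≤ R := le_trans (le_max_left _ _) (le_max_left _ _)
  refine ⟨R, hRR₀, ?_⟩
  intro r hr θ hθ
  have hr1 : 1 < r := lt_of_le_of_lt (le_trans (le_max_right _ _) (le_max_left _ _)) hr
  have hr0 : (0 : ℝ) < r := by linarith
  have hrne : r ≠ 0 := ne_of_gt hr0
  have hrR₀ : R₀ ≤ r := le_trans hRR₀ hr.le
  have hkey : S + S' + 1 < c 0 * m * r ^ 2 := by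
    have h1 : Real.sqrt ((S + S' + 1) / (c 0 * m)) < r :=
      lt_of_le_of_lt (le_max_right _ _) hr
    have h2 : (S + S' + 1) / (c 0 * m) < r ^ 2 := (Real.sqrt_lt' hr0).1 h1
    have h3 : 0 < c 0 * m := by positivity
    calc S + S' + 1 = (S + S' + 1) / (c 0 * m) * (c 0 * m) := by field_simp
    _ < r ^ 2 * (c 0 * m) := mul_lt_mul_of_pos_right h2 h3
    _ = c 0 * m * r ^ 2 := by ring
  have hmono : ∀ x : ℝ, R₀ ≤ x → ∀ j : ℕ, x ^ (-2 * (j : ℤ)) ≤ R₀ ^ (-2 * (j : ℤ)) := by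
    intro x hx j
    have hx0 : (0 : ℝ) < x := lt_of_lt_of_le hR₀ hx
    have e : ∀ y : ℝ, 0 < y → y ^ (-2 * (j : ℤ)) = (y⁻¹) ^ (2 * j) := by
      intro y hy
      rw [← zpow_natCast (y⁻¹), ← zpow_neg_one, ← zpow_mul]
      push_cast; ring_nf
    rw [e x hx0, e R₀ hR₀]
    exact pow_le_pow_left₀ (by positivity) (inv_anti₀ hR₀ hx) _
  set g : ℕ → ℝ → ℝ := fun i s => c i * s ^ (k i) * Real.cos ((k i : ℝ) * θ) with hg
  set g' : ℕ → ℝ → ℝ := fun i x =>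
    c i * ((k i : ℤ) : ℝ) * x ^ ((d : ℤ) + 1 - 2 * (i : ℤ)) * Real.cos ((k i : ℝ) * θ) with hg'
  have hterm : ∀ i : ℕ, ∀ y : ℝ, y ≠ 0 → HasDerivAt (g i) (g' i y) y := by
    intro i y hy
    have h := ((hasDerivAt_zpow (k i) y (Or.inl hy)).const_mul (c i)).mul_const
      (Real.cos ((k i : ℝ) * θ))
    refine h.congr_deriv ?_
    simp only [hg']
    rw [show (d : ℤ) + 1 - 2 * (i : ℤ) = k i - 1 by simp only [hk]; ring]
    ring
  have habs : ∀ j : ℕ, ∀ x : ℝ, R₀ ≤ x →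
      |g (j + 1) x| ≤ |c (j + 1)| * R₀ ^ (-2 * (j : ℤ)) * x ^ (d : ℤ) := by
    intro j x hx
    have hx0 : (0 : ℝ) < x := lt_of_lt_of_le hR₀ hx
    have hxsplit : x ^ (k (j + 1)) = x ^ (d : ℤ) * x ^ (-2 * (j : ℤ)) := by
      rw [← zpow_add₀ (ne_of_gt hx0), hk1]; ring_nf
    have hcb := Real.abs_cos_le_one ((k (j + 1) : ℝ) * θ)
    have hxp : (0 : ℝ) < x ^ (k (j + 1)) := zpow_pos hx0 _
    have h1 : |g (j + 1) x| ≤ |c (j + 1)| * x ^ (k (j + 1)) := by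
      simp only [hg, abs_mul, abs_of_pos hxp]
      have := mul_le_mul_of_nonneg_left hcb (mul_nonneg (abs_nonneg (c (j + 1))) hxp.le)
      linarith
    have h2 : (0 : ℝ) < x ^ (d : ℤ) := zpow_pos hx0 _
    have h3 := mul_le_mul_of_nonneg_left (hmono x hx j)
      (mul_nonneg (abs_nonneg (c (j + 1))) h2.le)
    calc |g (j + 1) x| ≤ |c (j + 1)| * x ^ (k (j + 1)) := h1
    _ = |c (j + 1)| * x ^ (d : ℤ) * x ^ (-2 * (j : ℤ)) := by rw [hxsplit]; ring
    _ ≤ |c (j + 1)| * x ^ (d : ℤ) * R₀ ^ (-2 * (j : ℤ)) := by linarith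
    _ = |c (j + 1)| * R₀ ^ (-2 * (j : ℤ)) * x ^ (d : ℤ) := by ring
  have habs' : ∀ j : ℕ, ∀ x : ℝ, R₀ ≤ x → |g' (j + 1) x| ≤
      |c (j + 1)| * |((k (j + 1) : ℤ) : ℝ)| * R₀ ^ (-2 * (j : ℤ)) * x ^ ((d : ℤ) - 1) := by
    intro j x hx
    have hx0 : (0 : ℝ) < x := lt_of_lt_of_le hR₀ hx
    have hxsplit : x ^ ((d : ℤ) + 1 - 2 * ((j : ℤ) + 1))
        = x ^ ((d : ℤ) - 1) * x ^ (-2 * (j : ℤ)) := by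
      rw [← zpow_add₀ (ne_of_gt hx0)]; ring_nf
    have hcb := Real.abs_cos_le_one ((k (j + 1) : ℝ) * θ)
    have hxp : (0 : ℝ) < x ^ ((d : ℤ) + 1 - 2 * ((j : ℤ) + 1)) := zpow_pos hx0 _
    have hexp : (d : ℤ) + 1 - 2 * (((j : ℕ) + 1 : ℕ) : ℤ) = (d : ℤ) + 1 - 2 * ((j : ℤ) + 1) := by
      push_cast; ring
    have h1 : |g' (j + 1) x| ≤ |c (j + 1)| * |((k (j + 1) : ℤ) : ℝ)| *
        x ^ ((d : ℤ) + 1 - 2 * ((j : ℤ) + 1)) := by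
      simp only [hg', abs_mul, hexp, abs_of_pos hxp]
      have := mul_le_mul_of_nonneg_left hcb
        (mul_nonneg (mul_nonneg (abs_nonneg (c (j + 1)))
          (abs_nonneg ((k (j + 1) : ℤ) : ℝ))) hxp.le)
      linarith
    have h2 : (0 : ℝ) < x ^ ((d : ℤ) - 1) := zpow_pos hx0 _
    have h3 := mul_le_mul_of_nonneg_left (hmono x hx j)
      (mul_nonneg (mul_nonneg (abs_nonneg (c (j + 1))) (abs_nonneg ((k (j + 1) : ℤ) : ℝ))) h2.le)
    calc |g' (j + 1) x| ≤ |c (j + 1)| * |((k (j + 1) : ℤ) : ℝ)| *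
        x ^ ((d : ℤ) + 1 - 2 * ((j : ℤ) + 1)) := h1
    _ = |c (j + 1)| * |((k (j + 1) : ℤ) : ℝ)| * x ^ ((d : ℤ) - 1) * x ^ (-2 * (j : ℤ)) := by
        rw [hxsplit]; ring
    _ ≤ |c (j + 1)| * |((k (j + 1) : ℤ) : ℝ)| * x ^ ((d : ℤ) - 1) * R₀ ^ (-2 * (j : ℤ)) := by
        linarith
    _ = |c (j + 1)| * |((k (j + 1) : ℤ) : ℝ)| * R₀ ^ (-2 * (j : ℤ)) * x ^ ((d : ℤ) - 1) := by
        ring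
  have hsum_r : Summable (fun i => g i r) := by
    apply (summable_nat_add_iff 1).1
    exact Summable.of_norm_bounded (hS.mul_right (r ^ (d : ℤ))) fun j => habs j r hrR₀
  have hsum'_r : Summable (fun i => g' i r) := by
    apply (summable_nat_add_iff 1).1
    exact Summable.of_norm_bounded (hS'2.mul_right (r ^ ((d : ℤ) - 1)))
      fun j => habs' j r hrR₀
  have hrmem : r ∈ Set.Ioo R (r + 1) := ⟨hr, by linarith⟩
  set u : ℕ → ℝ := fun i =>
    |c i| * |((k i : ℤ) : ℝ)| * R₀ ^ (-2 * (i : ℤ)) * (r + 1) ^ (d + 1) with hu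
  have hu_sum : Summable u := by
    apply (summable_nat_add_iff 1).1
    have h : Summable (fun j : ℕ =>
        (|c (j + 1)| * |((k (j + 1) : ℤ) : ℝ)| * R₀ ^ (-2 * (j : ℤ))) *
          (R₀ ^ (-2 : ℤ) * (r + 1) ^ (d + 1))) := hS'2.mul_right _
    refine h.congr fun j => ?_
    simp only [hu]
    rw [show (-2 * (((j : ℕ) + 1 : ℕ) : ℤ) : ℤ) = -2 * (j : ℤ) + (-2) by push_cast; ring,
      zpow_add₀ (ne_of_gt hR₀)]
    ring
  have hubound : ∀ i : ℕ, ∀ y : ℝ, y ∈ Set.Ioo R (r + 1) → ‖g' i y‖ ≤ u i := by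
    intro i y hy
    have hyR₀ : R₀ ≤ y := le_trans hRR₀ hy.1.le
    have hy0 : (0 : ℝ) < y := lt_of_lt_of_le hR₀ hyR₀
    have hsplit : y ^ ((d : ℤ) + 1 - 2 * (i : ℤ)) = y ^ ((d : ℤ) + 1) * y ^ (-2 * (i : ℤ)) := by
      rw [← zpow_add₀ (ne_of_gt hy0)]; ring_nf
    have hnat : ∀ z : ℝ, z ^ ((d : ℤ) + 1) = z ^ (d + 1 : ℕ) := by
      intro z
      rw [show ((d : ℤ) + 1) = ((d + 1 : ℕ) : ℤ) by push_cast; ring, zpow_natCast]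
    have h1 : y ^ ((d : ℤ) + 1) ≤ (r + 1) ^ (d + 1 : ℕ) := by
      rw [hnat y]
      exact pow_le_pow_left₀ hy0.le (by linarith [hy.2]) _
    have h2 : y ^ (-2 * (i : ℤ)) ≤ R₀ ^ (-2 * (i : ℤ)) := hmono y hyR₀ i
    have hyb : |y ^ ((d : ℤ) + 1 - 2 * (i : ℤ))| ≤ R₀ ^ (-2 * (i : ℤ)) * (r + 1) ^ (d + 1) := by
      rw [abs_of_pos (zpow_pos hy0 _), hsplit]
      have := mul_le_mul h1 h2 (zpow_pos hy0 _).le (by positivity)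
      linarith
    have hcb := Real.abs_cos_le_one ((k i : ℝ) * θ)
    have h3 : |c i| * |((k i : ℤ) : ℝ)| * |y ^ ((d : ℤ) + 1 - 2 * (i : ℤ))| *
        |Real.cos ((k i : ℝ) * θ)| ≤
        |c i| * |((k i : ℤ) : ℝ)| * (R₀ ^ (-2 * (i : ℤ)) * (r + 1) ^ (d + 1)) * 1 :=
      mul_le_mul (mul_le_mul_of_nonneg_left hyb (by positivity)) hcb (abs_nonneg _)
        (by positivity)
    simp only [hg', hu, Real.norm_eq_abs, abs_mul]
    linarith
  have hderivAt : HasDerivAt (fun z => ∑' i, g i z) (∑' i, g' i r) r :=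
    hasDerivAt_tsum_of_isPreconnected hu_sum isOpen_Ioo isPreconnected_Ioo
      (fun n y hy => hterm n y (ne_of_gt (lt_of_lt_of_le hR₀ (le_trans hRR₀ hy.1.le)))) hubound
      hrmem hsum_r hrmem
  have hk0 : k 0 = (d : ℤ) + 2 := by simp [hk]
  have hcos0 : ((k 0 : ℤ) : ℝ) = (d : ℝ) + 2 := by rw [hk0]; push_cast; ring
  set L : ℝ := Real.cos (((d : ℝ) + 2) * θ) with hL
  have hgL : Real.cos ((k 0 : ℝ) * θ) = L := by rw [hcos0]
  have hφsplit : (∑' i, g i r) = g 0 r + ∑' j, g (j + 1) r := Summable.tsum_eq_zero_add hsum_r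
  have hDsplit : (∑' i, g' i r) = g' 0 r + ∑' j, g' (j + 1) r := Summable.tsum_eq_zero_add hsum'_r
  have hsum_tail : Summable (fun j => ‖g (j + 1) r‖) :=
    Summable.of_nonneg_of_le (fun j => norm_nonneg _) (fun j => habs j r hrR₀)
      (hS.mul_right (r ^ (d : ℤ)))
  have hsum'_tail : Summable (fun j => ‖g' (j + 1) r‖) :=
    Summable.of_nonneg_of_le (fun j => norm_nonneg _) (fun j => habs' j r hrR₀)
      (hS'2.mul_right (r ^ ((d : ℤ) - 1)))
  have hT : |∑' j, g (j + 1) r| ≤ S * r ^ (d : ℤ) := by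
    refine (norm_tsum_le_tsum_norm hsum_tail).trans ?_
    rw [hSdef, ← tsum_mul_right]
    exact Summable.tsum_le_tsum (fun j => habs j r hrR₀) hsum_tail (hS.mul_right _)
  have hT' : |∑' j, g' (j + 1) r| ≤ S' * r ^ ((d : ℤ) - 1) := by
    refine (norm_tsum_le_tsum_norm hsum'_tail).trans ?_
    rw [hS'def, ← tsum_mul_right]
    exact Summable.tsum_le_tsum (fun j => habs' j r hrR₀) hsum'_tail (hS'2.mul_right _)
  have hpow1 : r ^ ((d : ℤ) + 2) = r ^ (d : ℤ) * r ^ (2 : ℕ) := by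
    rw [← zpow_natCast r 2, ← zpow_add₀ hrne]; norm_num
  have hpow2 : r ^ ((d : ℤ) + 1) = r ^ ((d : ℤ) - 1) * r ^ (2 : ℕ) := by
    rw [← zpow_natCast r 2, ← zpow_add₀ hrne]; ring_nf
  have hrd : (0 : ℝ) < r ^ (d : ℤ) := zpow_pos hr0 _
  have hrd1 : (0 : ℝ) < r ^ ((d : ℤ) - 1) := zpow_pos hr0 _
  have hrd2 : (0 : ℝ) < r ^ ((d : ℤ) + 2) := zpow_pos hr0 _
  have hrd1' : (0 : ℝ) < r ^ ((d : ℤ) + 1) := zpow_pos hr0 _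
  have hg0 : g 0 r = c 0 * r ^ ((d : ℤ) + 2) * L := by
    simp only [hg]
    rw [hgL, hk0]
  have hg'0 : g' 0 r = c 0 * ((d : ℝ) + 2) * r ^ ((d : ℤ) + 1) * L := by
    simp only [hg']
    rw [hgL, hcos0]
    norm_num
  have hdnn : (0 : ℝ) ≤ (d : ℝ) := Nat.cast_nonneg d
  have hmain : S * r ^ (d : ℤ) < c 0 * m * r ^ ((d : ℤ) + 2) := by
    have h4 : S < c 0 * m * r ^ 2 := by linarith
    rw [hpow1]
    have h8 := mul_lt_mul_of_pos_right h4 hrd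
    linarith
  have hmain' : S' * r ^ ((d : ℤ) - 1) < c 0 * m * ((d : ℝ) + 2) * r ^ ((d : ℤ) + 1) := by
    have h4 : S' < c 0 * m * r ^ 2 := by linarith
    have h5 : S' * r ^ ((d : ℤ) - 1) < c 0 * m * r ^ ((d : ℤ) + 1) := by
      rw [hpow2]
      have h8 := mul_lt_mul_of_pos_right h4 hrd1
      linarith
    have h6 : c 0 * m * r ^ ((d : ℤ) + 1) ≤ c 0 * m * ((d : ℝ) + 2) * r ^ ((d : ℤ) + 1) := by
      have h7 : (0 : ℝ) ≤ c 0 * m * r ^ ((d : ℤ) + 1) * ((d : ℝ) + 1) := by positivity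
      linarith
    linarith
  have hLcases : (0 < L → m ≤ L) ∧ (L ≤ 0 → L ≤ -m) := by
    constructor
    · intro h; rwa [abs_of_pos h] at hθ
    · intro h; rw [abs_of_nonpos h] at hθ; linarith
  have hTb := abs_le.1 hT
  have hT'b := abs_le.1 hT'
  refine ⟨hderivAt, ?_, ?_⟩
  · rw [hφsplit, hg0]
    constructor
    · intro hpos
      by_contra hneg
      push_neg at hneg
      have hLm : L ≤ -m := hLcases.2 hneg
      linarith [hTb.2, hmain, mul_le_mul_of_nonneg_left hLm (mul_pos hc₀ hrd2).le]
    · intro hpos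
      have hLm : m ≤ L := hLcases.1 hpos
      linarith [hTb.1, hmain, mul_le_mul_of_nonneg_left hLm (mul_pos hc₀ hrd2).le]
  · rw [hDsplit, hg'0]
    constructor
    · intro hpos
      have hLm : m ≤ L := hLcases.1 hpos
      linarith [hT'b.1, hmain', mul_le_mul_of_nonneg_left hLm
        (mul_pos (mul_pos hc₀ (by positivity : (0 : ℝ) < (d : ℝ) + 2)) hrd1').le]
    · intro hpos
      by_contra hneg
      push_neg at hneg
      have hLm : L ≤ -m := hLcases.2 hneg
      linarith [hT'b.2, hmain', mul_le_mul_of_nonneg_left hLm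
        (mul_pos (mul_pos hc₀ (by positivity : (0 : ℝ) < (d : ℝ) + 2)) hrd1').le]
end
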